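/- arXiv:1705.09971 — 2 statements merged into one kernel-verified Lean document; each statement's English description precedes it below -/
import Mathlib

section
/- QUEST quaternion formula: let ρ be a 3×3 real matrix, z ∈ ℝ³, σ ∈ ℝ, and let K be the 4×4 matrix with upper-left block ρ − σI, upper-right column z, lower-left row zᵀ, and lower-right entry σ. Suppose q = (q_v, q_s) ∈ ℝ⁴ with q_s ≠ 0 satisfies K q = λ q, and suppose the 3×3 matrix (σ + λ)I − ρ is invertible. Then the Rodrigues parameter vector p = q_v / q_s satisfies p = ((σ + λ)I − ρ)^{-1} z, equivalently p = −(ρ − (σ + λ)I)^{-1} z. -/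
/-!
The vector rows of `K q = λ q` read `(ρ − σI) q_v + q_s z = λ q_v`, i.e.
`((σ + λ)I − ρ) q_v = q_s z`; dividing by `q_s` and inverting gives the formula, and the
second form follows because `ρ − (σ + λ)I` sends `−p` to `z` as well.
-/

open Matrix

/-- The Davenport-type 4×4 matrix with upper-left 3×3 block `ρ − σI`, upper-right
column `z`, lower-left row `zᵀ`, and lower-right entry `σ`. -/
def davenportK (ρ : Matrix (Fin 3) (Fin 3) ℝ) (z : Fin 3 → ℝ) (σ : ℝ) :
    Matrix (Fin 3 ⊕ Unit) (Fin 3 ⊕ Unit) ℝ :=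
  fromBlocks (ρ - σ • 1) (Matrix.of fun i _ => z i) (Matrix.of fun _ j => z j)
    (Matrix.of fun _ _ => σ)

theorem Matrix.eq_inv_mulVec_of_mulVec_eq {n α : Type*} [Fintype n] [DecidableEq n]
    [CommRing α] {A : Matrix n n α} (hA : IsUnit A) {u v : n → α} (h : A *ᵥ v = u) :
    v = A⁻¹ *ᵥ u := by
  rw [← h, mulVec_mulVec, nonsing_inv_mul A ((isUnit_iff_isUnit_det A).mp hA), one_mulVec]

theorem davenportK_mulVec_comp_inl (ρ : Matrix (Fin 3) (Fin 3) ℝ) (z : Fin 3 → ℝ) (σ : ℝ)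
    (q : Fin 3 ⊕ Unit → ℝ) :
    (davenportK ρ z σ *ᵥ q) ∘ Sum.inl = (ρ - σ • 1) *ᵥ (q ∘ Sum.inl) + q (Sum.inr ()) • z := by
  ext i
  simp [davenportK, fromBlocks_mulVec, mulVec, dotProduct, mul_comm]

theorem vector_part_eq_of_davenportK_eigenvector {ρ : Matrix (Fin 3) (Fin 3) ℝ} {z : Fin 3 → ℝ}
    {σ lam : ℝ} {q : Fin 3 ⊕ Unit → ℝ} (heig : davenportK ρ z σ *ᵥ q = lam • q) :
    ((σ + lam) • (1 : Matrix (Fin 3) (Fin 3) ℝ) - ρ) *ᵥ (q ∘ Sum.inl) = q (Sum.inr ()) • z := by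
  have hrows : (ρ - σ • 1) *ᵥ (q ∘ Sum.inl) + q (Sum.inr ()) • z = lam • (q ∘ Sum.inl) := by
    rw [← davenportK_mulVec_comp_inl, heig]
    rfl
  rw [sub_mulVec, smul_mulVec, one_mulVec] at hrows ⊢
  linear_combination (norm := module) -hrows

/-- QUEST quaternion formula: if `q = (q_v, q_s)` with `q_s ≠ 0` satisfies `K q = λ q`
and `(σ + λ)I − ρ` is invertible, then the Rodrigues parameter vector `p = q_v / q_s`
satisfies `p = ((σ + λ)I − ρ)⁻¹ z`, equivalently `p = −(ρ − (σ + λ)I)⁻¹ z`. -/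
theorem quest_rodrigues_formula (ρ : Matrix (Fin 3) (Fin 3) ℝ) (z : Fin 3 → ℝ)
    (σ lam : ℝ) (q : Fin 3 ⊕ Unit → ℝ) (hqs : q (Sum.inr ()) ≠ 0)
    (heig : (davenportK ρ z σ).mulVec q = lam • q)
    (hinv : IsUnit ((σ + lam) • (1 : Matrix (Fin 3) (Fin 3) ℝ) - ρ)) :
    (q (Sum.inr ()))⁻¹ • (fun i => q (Sum.inl i)) =
        ((σ + lam) • (1 : Matrix (Fin 3) (Fin 3) ℝ) - ρ)⁻¹.mulVec z ∧
    (q (Sum.inr ()))⁻¹ • (fun i => q (Sum.inl i)) =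
        -((ρ - (σ + lam) • (1 : Matrix (Fin 3) (Fin 3) ℝ))⁻¹.mulVec z) := by
  change (q (Sum.inr ()))⁻¹ • (q ∘ Sum.inl) = _ ∧ (q (Sum.inr ()))⁻¹ • (q ∘ Sum.inl) = _
  set M := (σ + lam) • (1 : Matrix (Fin 3) (Fin 3) ℝ) - ρ
  set p := (q (Sum.inr ()))⁻¹ • (q ∘ Sum.inl)
  have hp : M *ᵥ p = z := by
    rw [mulVec_smul, vector_part_eq_of_davenportK_eigenvector heig, smul_smul, inv_mul_cancel₀ hqs, one_smul]
  have hneg : ρ - (σ + lam) • 1 = -M := (neg_sub _ _).symm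
  refine ⟨eq_inv_mulVec_of_mulVec_eq hinv hp, neg_eq_iff_eq_neg.mp ?_⟩
  rw [hneg]
  exact eq_inv_mulVec_of_mulVec_eq hinv.neg (by rw [mulVec_neg, neg_mulVec, neg_neg, hp])
end

section
/- QUEST characteristic equation: let ρ be a 3×3 real matrix, z ∈ ℝ³, σ ∈ ℝ, and let K be the 4×4 matrix with upper-left block ρ − σI, upper-right column z, lower-left row zᵀ, and lower-right entry σ. If q = (q_v, q_s) ∈ ℝ⁴ with q_s ≠ 0 satisfies K q = λ q and (σ + λ)I − ρ is invertible, then λ satisfies zᵀ ((σ + λ)I − ρ)^{-1} z + σ − λ = 0, equivalently zᵀ (ρ − (σ + λ)I)^{-1} z + λ − σ = 0. -/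
/-!
The first block row of `K q = λ q` reads `((σ + λ)I − ρ) q_v = q_s z`, so
`q_v = q_s ((σ + λ)I − ρ)⁻¹ z`; substituting this into the last row `zᵀ q_v = (λ − σ) q_s`
and cancelling `q_s ≠ 0` gives the equation.
-/

open Matrix

lemma Matrix.inv_neg_of_isUnit {n α : Type*} [Fintype n] [DecidableEq n] [CommRing α]
    {A : Matrix n n α} (hA : IsUnit A) : (-A)⁻¹ = -A⁻¹ :=
  inv_eq_right_inv <| by rw [neg_mul_neg, mul_nonsing_inv A ((isUnit_iff_isUnit_det A).mp hA)]

lemma dotProduct_inv_mulVec_eq_of_mulVec_eq_smul {n 𝕜 : Type*} [Fintype n] [DecidableEq n]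
    [Field 𝕜] {A : Matrix n n 𝕜} (hA : IsUnit A) {v z : n → 𝕜} {s c : 𝕜} (hs : s ≠ 0)
    (hv : A *ᵥ v = s • z) (hz : z ⬝ᵥ v = c * s) : z ⬝ᵥ A⁻¹ *ᵥ z = c := by
  have hv' : v = s • A⁻¹ *ᵥ z := by
    rw [← mulVec_smul, ← hv, mulVec_mulVec,
      nonsing_inv_mul A ((isUnit_iff_isUnit_det A).mp hA), one_mulVec]
  rw [hv', dotProduct_smul, smul_eq_mul, mul_comm c] at hz
  exact mul_left_cancel₀ hs hz

lemma davenportK_mulVec_eq_smul {ρ : Matrix (Fin 3) (Fin 3) ℝ} {z : Fin 3 → ℝ} {σ lam : ℝ}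
    {q : Fin 3 ⊕ Unit → ℝ} (heig : davenportK ρ z σ *ᵥ q = lam • q) :
    ((σ + lam) • (1 : Matrix (Fin 3) (Fin 3) ℝ) - ρ) *ᵥ (q ∘ Sum.inl) = q (Sum.inr ()) • z ∧
      z ⬝ᵥ (q ∘ Sum.inl) = (lam - σ) * q (Sum.inr ()) := by
  rw [davenportK, fromBlocks_mulVec] at heig
  constructor
  · ext i
    have := congrFun heig (Sum.inl i)
    simp only [Sum.elim_inl, Pi.add_apply, mulVec, dotProduct, Matrix.sub_apply,
      Matrix.smul_apply, one_apply, smul_eq_mul, mul_ite, mul_one, mul_zero, Function.comp_apply,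
      sub_mul, ite_mul, zero_mul, Finset.sum_sub_distrib, Finset.sum_ite_eq, Finset.mem_univ,
      ↓reduceIte, Finset.univ_unique, PUnit.default_eq_unit, of_apply, Finset.sum_singleton,
      Pi.smul_apply, add_mul] at this ⊢
    linarith
  · have := congrFun heig (Sum.inr ())
    simp only [Sum.elim_inr, Pi.add_apply, mulVec, dotProduct, of_apply, Function.comp_apply,
      Finset.univ_unique, PUnit.default_eq_unit, Finset.sum_singleton, Pi.smul_apply,
      smul_eq_mul] at this ⊢
    linarith

/-- QUEST characteristic equation: if `q = (q_v, q_s)` with `q_s ≠ 0` satisfies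
`K q = λ q` and `(σ + λ)I − ρ` is invertible, then `λ` satisfies
`zᵀ ((σ + λ)I − ρ)⁻¹ z + σ − λ = 0`, equivalently
`zᵀ (ρ − (σ + λ)I)⁻¹ z + λ − σ = 0`. -/
theorem quest_characteristic_equation (ρ : Matrix (Fin 3) (Fin 3) ℝ) (z : Fin 3 → ℝ)
    (σ lam : ℝ) (q : Fin 3 ⊕ Unit → ℝ) (hqs : q (Sum.inr ()) ≠ 0)
    (heig : (davenportK ρ z σ).mulVec q = lam • q)
    (hinv : IsUnit ((σ + lam) • (1 : Matrix (Fin 3) (Fin 3) ℝ) - ρ)) :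
    z ⬝ᵥ (((σ + lam) • (1 : Matrix (Fin 3) (Fin 3) ℝ) - ρ)⁻¹.mulVec z) + σ - lam = 0 ∧
    z ⬝ᵥ ((ρ - (σ + lam) • (1 : Matrix (Fin 3) (Fin 3) ℝ))⁻¹.mulVec z) + lam - σ = 0 := by
  obtain ⟨hv, hz⟩ := davenportK_mulVec_eq_smul heig
  have hsecular := dotProduct_inv_mulVec_eq_of_mulVec_eq_smul hinv hqs hv hz
  refine ⟨by linarith, ?_⟩
  rw [← neg_sub ((σ + lam) • (1 : Matrix (Fin 3) (Fin 3) ℝ)) ρ, inv_neg_of_isUnit hinv,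
    neg_mulVec, dotProduct_neg, hsecular]
  ring
end
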